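/- arXiv:2101.09636 — 3 statements merged into one kernel-verified Lean document; each statement's English description precedes it below -/
import Mathlib

section
/- The submodule W_1 = span_F{E_i^* 𝟏 : p | k_i} is the unique maximal T-submodule of the primary module W_0 = span_F{E_i^* 𝟏 : i ∈ [0,d]}. In particular, W_0 is an indecomposable T-module and W_0/W_1 is irreducible. -/
open Matrix

/-- An association scheme of class `d` on a finite set `X`: every pair is assigned a
relation index `r x y ∈ [0,d]`, relation `0` is the diagonal, there is a transpose
involution `inv`, each relation is attained, and the intersection numbers
`p i j ℓ = |{z : (x,z) ∈ R_i, (z,y) ∈ R_j}|` depend only on `ℓ = r x y`. -/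
structure AssocScheme (X : Type*) [Fintype X] [DecidableEq X] (d : ℕ) where
  r : X → X → Fin (d + 1)
  r_diag : ∀ x y : X, r x y = 0 ↔ x = y
  inv : Fin (d + 1) → Fin (d + 1)
  r_symm : ∀ x y : X, r y x = inv (r x y)
  p : Fin (d + 1) → Fin (d + 1) → Fin (d + 1) → ℕ
  card_p : ∀ (i j : Fin (d + 1)) (x y : X),
    (Finset.univ.filter fun z : X => r x z = i ∧ r z y = j).card = p i j (r x y)
  surj : ∀ i : Fin (d + 1), ∃ x y : X, r x y = i

namespace AssocScheme

variable {X : Type*} [Fintype X] [DecidableEq X] {d : ℕ}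

/-- The valency `k_i = p_{i i'}^0` of the relation `R_i`. -/
def k (S : AssocScheme X d) (i : Fin (d + 1)) : ℕ := S.p i (S.inv i) 0

variable (F : Type*) [Field F]

/-- The adjacency matrix of the relation `R_j` over `F`. -/
def adjM (S : AssocScheme X d) (j : Fin (d + 1)) : Matrix X X F :=
  Matrix.of fun y z => if S.r y z = j then 1 else 0

/-- The dual idempotent `E_i^*` with respect to the base point `x`. -/
def dualIdem (S : AssocScheme X d) (x : X) (i : Fin (d + 1)) : Matrix X X F :=
  Matrix.of fun y z => if y = z ∧ S.r x y = i then 1 else 0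

/-- The all-one matrix `J`. -/
def Jmat : Matrix X X F := Matrix.of fun _ _ => 1

/-- The (modular) Terwilliger algebra of `S` with respect to `x`. -/
def terw (S : AssocScheme X d) (x : X) : Subalgebra F (Matrix X X F) :=
  Algebra.adjoin F (Set.range (S.adjM F) ∪ Set.range (S.dualIdem F x))

/-- The primary module `W_0 = span_F {E_i^* 𝟏 : i ∈ [0,d]}`. -/
def W0 (S : AssocScheme X d) (x : X) : Submodule F (X → F) :=
  Submodule.span F (Set.range fun i : Fin (d + 1) => S.dualIdem F x i *ᵥ (1 : X → F))

/-- The span of `{E_i^* 𝟏 : p ∣ k_i}`. -/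
def W1 (p : ℕ) (S : AssocScheme X d) (x : X) : Submodule F (X → F) :=
  Submodule.span F {v : X → F | ∃ i : Fin (d + 1),
    p ∣ S.k i ∧ v = S.dualIdem F x i *ᵥ (1 : X → F)}

/-- A subspace of `F^X` closed under left multiplication by the Terwilliger algebra. -/
def TInvariant (S : AssocScheme X d) (x : X) (U : Submodule F (X → F)) : Prop :=
  ∀ Z ∈ S.terw F x, ∀ v ∈ U, Z *ᵥ v ∈ U

/-- The indicator vector of the sphere `{y : r x y = i}`. -/
def chi (S : AssocScheme X d) (x : X) (i : Fin (d + 1)) : X → F :=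
  fun y => if S.r x y = i then 1 else 0

variable (S : AssocScheme X d) (x : X)

lemma dualIdem_mulVec (i : Fin (d + 1)) (v : X → F) :
    S.dualIdem F x i *ᵥ v = fun y => if S.r x y = i then v y else 0 := by
  funext y
  have h : ∀ z, (if y = z ∧ S.r x y = i then (1 : F) else 0) * v z
      = if y = z then (if S.r x y = i then v z else 0) else 0 := by
    intro z; by_cases h1 : y = z <;> by_cases h2 : S.r x y = i <;> simp [h1, h2]
  simp only [dualIdem, mulVec, dotProduct, of_apply, h, Finset.sum_ite_eq,
    Finset.mem_univ, if_true]

lemma dualIdem_mulVec_one (i : Fin (d + 1)) :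
    S.dualIdem F x i *ᵥ (1 : X → F) = chi F S x i := by
  rw [dualIdem_mulVec]; funext y; by_cases h : S.r x y = i <;> simp [chi, h]

lemma dualIdem_mulVec_chi (i j : Fin (d + 1)) :
    S.dualIdem F x i *ᵥ chi F S x j = if i = j then chi F S x i else 0 := by
  rw [dualIdem_mulVec]
  funext y
  simp only [chi, Pi.zero_apply, apply_ite (fun f : X → F => f y)]
  split_ifs <;> simp_all

lemma sphere_card (i : Fin (d + 1)) :
    (Finset.univ.filter fun z : X => S.r x z = i).card = S.k i := by
  have h := S.card_p i (S.inv i) x x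
  rw [(S.r_diag x x).mpr rfl] at h
  rw [k, ← h]
  congr 1
  apply Finset.filter_congr
  intro z _
  constructor
  · intro hz; exact ⟨hz, by rw [S.r_symm, hz]⟩
  · exact And.left

lemma k_zero (y : X) : S.k 0 = 1 := by
  rw [← sphere_card S y 0]
  have : (Finset.univ.filter fun z : X => S.r y z = 0) = {y} := by
    ext z
    simp only [Finset.mem_filter, Finset.mem_univ, true_and, Finset.mem_singleton]
    rw [S.r_diag y z]
    exact eq_comm
  rw [this, Finset.card_singleton]

lemma dualIdem_mem (i : Fin (d + 1)) : S.dualIdem F x i ∈ S.terw F x :=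
  Algebra.subset_adjoin (Or.inr ⟨i, rfl⟩)

lemma jmat_mem : (Jmat F : Matrix X X F) ∈ S.terw F x := by
  have h : (Jmat F : Matrix X X F) = ∑ j, S.adjM F j := by
    ext y z
    simp [Jmat, adjM, Matrix.sum_apply, Finset.sum_ite_eq]
  rw [h]
  exact Subalgebra.sum_mem _ fun j _ => Algebra.subset_adjoin (Or.inl ⟨j, rfl⟩)

lemma jmat_mulVec_chi (i : Fin (d + 1)) :
    (Jmat F : Matrix X X F) *ᵥ chi F S x i = (S.k i : F) • (1 : X → F) := by
  funext y
  simp only [Jmat, mulVec, dotProduct, of_apply, chi, one_mul, Pi.smul_apply,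
    Pi.one_apply, smul_eq_mul, mul_one]
  rw [Finset.sum_boole, ← sphere_card S x i]

lemma W0_eq : S.W0 F x = Submodule.span F (Set.range (chi F S x)) := by
  have h : (fun i : Fin (d + 1) => S.dualIdem F x i *ᵥ (1 : X → F)) = chi F S x :=
    funext fun i => dualIdem_mulVec_one F S x i
  rw [W0, h]

lemma chi_mem_W0 (i : Fin (d + 1)) : chi F S x i ∈ S.W0 F x := by
  rw [W0_eq]; exact Submodule.subset_span ⟨i, rfl⟩

lemma sum_chi : ∑ i, chi F S x i = (1 : X → F) := by
  funext y
  simp [chi, Finset.sum_apply, Finset.sum_ite_eq]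

lemma one_mem_W0 : (1 : X → F) ∈ S.W0 F x := by
  rw [← sum_chi F S x]
  exact Submodule.sum_mem _ fun i _ => chi_mem_W0 F S x i

lemma chi_smul_mem (U : Submodule F (X → F)) (hU : TInvariant F S x U) (v : X → F)
    (hv : v ∈ U) (c : Fin (d + 1) → F) (hc : ∑ j, c j • chi F S x j = v)
    (i : Fin (d + 1)) : c i • chi F S x i ∈ U := by
  have h := hU _ (dualIdem_mem F S x i) v hv
  have heq : S.dualIdem F x i *ᵥ v = c i • chi F S x i := by
    rw [← hc, ← Matrix.mulVecLin_apply, map_sum]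
    have : ∀ j, (S.dualIdem F x i).mulVecLin (c j • chi F S x j)
        = c j • if i = j then chi F S x i else 0 := by
      intro j
      rw [LinearMap.map_smul, Matrix.mulVecLin_apply, dualIdem_mulVec_chi]
    simp only [this, smul_ite, smul_zero, Finset.sum_ite_eq, Finset.mem_univ, if_true]
  rwa [heq] at h

lemma maximal_aux (p : ℕ) [Fact p.Prime] [CharP F p] (U : Submodule F (X → F))
    (hU : TInvariant F S x U) (hle : U ≤ S.W0 F x) (hns : ¬ U ≤ W1 F p S x) :
    U = S.W0 F x := by
  obtain ⟨v, hvU, hvW1⟩ := SetLike.not_le_iff_exists.mp hns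
  have hvW0 := hle hvU
  rw [W0_eq, Submodule.mem_span_range_iff_exists_fun F] at hvW0
  obtain ⟨c, hc⟩ := hvW0
  have hex : ∃ i, ¬ (p ∣ S.k i) ∧ c i ≠ 0 := by
    by_contra h
    push_neg at h
    apply hvW1
    rw [← hc]
    apply Submodule.sum_mem
    intro j _
    by_cases hj : p ∣ S.k j
    · exact Submodule.smul_mem _ _ (Submodule.subset_span
        ⟨j, hj, (dualIdem_mulVec_one F S x j).symm⟩)
    · rw [h j hj, zero_smul]; exact zero_mem _
  obtain ⟨i, hpk, hci⟩ := hex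
  have h1 : c i • chi F S x i ∈ U := chi_smul_mem F S x U hU v hvU c hc i
  have h2 : chi F S x i ∈ U := by
    have := U.smul_mem (c i)⁻¹ h1
    rwa [smul_smul, inv_mul_cancel₀ hci, one_smul] at this
  have h3 : (S.k i : F) • (1 : X → F) ∈ U := by
    have := hU _ (jmat_mem F S x) _ h2
    rwa [jmat_mulVec_chi] at this
  have hki : (S.k i : F) ≠ 0 := by
    rw [Ne, CharP.cast_eq_zero_iff F p]; exact hpk
  have h4 : (1 : X → F) ∈ U := by
    have := U.smul_mem (S.k i : F)⁻¹ h3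
    rwa [smul_smul, inv_mul_cancel₀ hki, one_smul] at this
  refine le_antisymm hle ?_
  rw [W0, Submodule.span_le]
  rintro _ ⟨j, rfl⟩
  exact hU _ (dualIdem_mem F S x j) _ h4

lemma W1_le_W0 (p : ℕ) : W1 F p S x ≤ S.W0 F x := by
  rw [W1, Submodule.span_le]
  rintro _ ⟨i, -, rfl⟩
  exact Submodule.subset_span ⟨i, rfl⟩

lemma W1_le_ker (p : ℕ) [Fact p.Prime] :
    W1 F p S x ≤ LinearMap.ker (LinearMap.proj (R := F) (φ := fun _ : X => F) x) := by
  rw [W1, Submodule.span_le]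
  rintro _ ⟨i, hi, rfl⟩
  have hi0 : i ≠ 0 := by
    rintro rfl
    rw [k_zero S x] at hi
    exact (Fact.out : p.Prime).ne_one (Nat.dvd_one.mp hi)
  simp only [SetLike.mem_coe, LinearMap.mem_ker, LinearMap.proj_apply]
  rw [dualIdem_mulVec_one]
  simp only [chi, (S.r_diag x x).mpr rfl]
  rw [if_neg (fun h => hi0 h.symm)]

lemma W1_ne_W0 (p : ℕ) [Fact p.Prime] : W1 F p S x ≠ S.W0 F x := by
  intro h
  have h1 : (1 : X → F) ∈ W1 F p S x := h ▸ one_mem_W0 F S x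
  have := W1_le_ker F S x p h1
  simp only [LinearMap.mem_ker, LinearMap.proj_apply, Pi.one_apply] at this
  exact one_ne_zero this

theorem W1_unique_maximal (p : ℕ) [Fact p.Prime] [CharP F p]
    (S : AssocScheme X d) (x : X) :
    W1 F p S x ≤ S.W0 F x ∧ W1 F p S x ≠ S.W0 F x ∧
    (∀ U : Submodule F (X → F), TInvariant F S x U → U ≤ S.W0 F x → U ≠ S.W0 F x →
      U ≤ W1 F p S x) ∧
    (¬ ∃ U V : Submodule F (X → F), TInvariant F S x U ∧ TInvariant F S x V ∧
      U ≠ ⊥ ∧ V ≠ ⊥ ∧ U ⊓ V = ⊥ ∧ U ⊔ V = S.W0 F x) ∧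
    (∀ U : Submodule F (X → F), TInvariant F S x U → W1 F p S x ≤ U → U ≤ S.W0 F x →
      U = W1 F p S x ∨ U = S.W0 F x) := by
  have hle := W1_le_W0 F S x p
  have hne := W1_ne_W0 F S x p
  have hmax : ∀ U, TInvariant F S x U → U ≤ S.W0 F x → U ≠ S.W0 F x →
      U ≤ W1 F p S x := by
    intro U hU hU0 hUne
    by_contra h
    exact hUne (maximal_aux F S x p U hU hU0 h)
  refine ⟨hle, hne, hmax, ?_, ?_⟩
  · rintro ⟨U, V, hU, hV, hUb, hVb, hUV, hsup⟩
    have hUle : U ≤ S.W0 F x := le_sup_left.trans hsup.le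
    have hVle : V ≤ S.W0 F x := le_sup_right.trans hsup.le
    by_cases hU0 : U = S.W0 F x
    · apply hVb
      rw [← le_bot_iff, ← hUV]
      exact le_inf (hU0 ▸ hVle) le_rfl
    by_cases hV0 : V = S.W0 F x
    · apply hUb
      rw [← le_bot_iff, ← hUV]
      exact le_inf le_rfl (hV0 ▸ hUle)
    · have h := sup_le (hmax U hU hUle hU0) (hmax V hV hVle hV0)
      rw [hsup] at h
      exact hne (le_antisymm hle h)
  · intro U hU h1 h2
    by_cases h : U = S.W0 F x
    · exact Or.inr h
    · exact Or.inl (le_antisymm (hmax U hU h2 h) h1)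

end AssocScheme
end

section
/- The F-span B_0 of {E_i^* J E_j^* : i, j ∈ [0,d]} is a two-sided ideal of the Terwilliger algebra T, and the F-span B_1 of {E_i^* J E_j^* : p divides k_i k_j} is also a two-sided ideal of T. -/
open Matrix

namespace AssocScheme

variable {X : Type*} [Fintype X] [DecidableEq X] {d : ℕ}

variable (F : Type*) [Field F]

/-- `B_0 = span_F {E_i^* J E_j^* : i,j ∈ [0,d]}`. -/
def B0 (S : AssocScheme X d) (x : X) : Submodule F (Matrix X X F) :=
  Submodule.span F (Set.range fun q : Fin (d + 1) × Fin (d + 1) =>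
    S.dualIdem F x q.1 * Jmat F * S.dualIdem F x q.2)

/-- `B_1 = span_F {E_i^* J E_j^* : p ∣ k_i k_j}`. -/
def B1 (p : ℕ) (S : AssocScheme X d) (x : X) : Submodule F (Matrix X X F) :=
  Submodule.span F {Z : Matrix X X F | ∃ i j : Fin (d + 1),
    p ∣ S.k i * S.k j ∧ Z = S.dualIdem F x i * Jmat F * S.dualIdem F x j}


section Helpers

set_option linter.unusedSectionVars false

lemma inv_inv (S : AssocScheme X d) (i : Fin (d + 1)) : S.inv (S.inv i) = i := by
  obtain ⟨a, b, hab⟩ := S.surj i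
  have h1 := S.r_symm a b
  have h2 := S.r_symm b a
  rw [hab] at h1
  rw [h1] at h2
  rw [h2] at hab
  exact hab

lemma inv_injective (S : AssocScheme X d) : Function.Injective S.inv :=
  Function.LeftInverse.injective S.inv_inv

lemma r_eq_iff (S : AssocScheme X d) (y z : X) (i : Fin (d + 1)) :
    S.r y z = i ↔ S.r z y = S.inv i := by
  constructor
  · intro h; rw [S.r_symm, h]
  · intro h; rw [S.r_symm] at h; exact S.inv_injective h

lemma card_r_eq (S : AssocScheme X d) (y : X) (i : Fin (d + 1)) :
    (Finset.univ.filter fun z : X => S.r y z = i).card = S.k i := by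
  have h0 : S.r y y = 0 := (S.r_diag y y).mpr rfl
  have := S.card_p i (S.inv i) y y
  rw [h0] at this
  show _ = S.p i (S.inv i) 0
  rw [← this]
  congr 1
  ext z
  simp only [Finset.mem_filter, Finset.mem_univ, true_and]
  constructor
  · intro h; exact ⟨h, (S.r_eq_iff y z i).mp h⟩
  · intro h; exact h.1

lemma nonempty_X (S : AssocScheme X d) : Nonempty X := by
  obtain ⟨a, _, _⟩ := S.surj 0
  exact ⟨a⟩

lemma k_inv (S : AssocScheme X d) (i : Fin (d + 1)) : S.k (S.inv i) = S.k i := by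
  have key : Fintype.card X * S.k i = Fintype.card X * S.k (S.inv i) := by
    have h1 : ∑ y : X, ∑ z : X, (if S.r y z = i then 1 else 0) = Fintype.card X * S.k i := by
      have : ∀ y : X, ∑ z : X, (if S.r y z = i then 1 else 0) = S.k i := fun y => by
        rw [← Finset.card_filter, S.card_r_eq y i]
      rw [Finset.sum_congr rfl fun y _ => this y, Finset.sum_const, smul_eq_mul, Finset.card_univ]
    have h2 : ∑ z : X, ∑ y : X, (if S.r y z = i then 1 else 0) = Fintype.card X * S.k (S.inv i) := by
      have : ∀ z : X, ∑ y : X, (if S.r y z = i then 1 else 0) = S.k (S.inv i) := by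
        intro z
        have e : ∀ y : X, (if S.r y z = i then 1 else 0) = (if S.r z y = S.inv i then 1 else 0) := by
          intro y; simp only [S.r_eq_iff y z i]
        rw [Finset.sum_congr rfl fun y _ => e y, ← Finset.card_filter, S.card_r_eq z (S.inv i)]
      rw [Finset.sum_congr rfl fun z _ => this z, Finset.sum_const, smul_eq_mul, Finset.card_univ]
    rw [← h1, ← h2, Finset.sum_comm]
  have : Nonempty X := S.nonempty_X
  have hc : Fintype.card X ≠ 0 := Fintype.card_ne_zero
  exact (Nat.eq_of_mul_eq_mul_left (Nat.pos_of_ne_zero hc) key).symm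

lemma p_transpose (S : AssocScheme X d) (i j l : Fin (d + 1)) :
    S.p i j l = S.p (S.inv j) (S.inv i) (S.inv l) := by
  obtain ⟨a, b, hab⟩ := S.surj l
  have hba : S.r b a = S.inv l := by rw [S.r_symm, hab]
  have h1 := S.card_p i j a b
  have h2 := S.card_p (S.inv j) (S.inv i) b a
  rw [hab] at h1; rw [hba] at h2
  rw [← h1, ← h2]
  congr 1
  ext z
  simp only [Finset.mem_filter, Finset.mem_univ, true_and]
  rw [S.r_eq_iff a z i, S.r_eq_iff z b j, and_comm]

lemma k_mul_p (S : AssocScheme X d) (i j l : Fin (d + 1)) :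
    S.k l * S.p i j l = S.k i * S.p l (S.inv j) i := by
  obtain ⟨x⟩ := S.nonempty_X
  have h1 : ∑ y : X, ∑ z : X, (if S.r x y = l ∧ S.r x z = i ∧ S.r z y = j then 1 else 0)
      = S.k l * S.p i j l := by
    have step : ∀ y : X, ∑ z : X, (if S.r x y = l ∧ S.r x z = i ∧ S.r z y = j then 1 else 0)
        = if S.r x y = l then S.p i j l else 0 := by
      intro y
      by_cases h : S.r x y = l
      · rw [if_pos h]
        have e : ∀ z : X, (if S.r x y = l ∧ S.r x z = i ∧ S.r z y = j then (1:ℕ) else 0)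
            = if S.r x z = i ∧ S.r z y = j then 1 else 0 := fun z => by simp [h]
        rw [Finset.sum_congr rfl fun z _ => e z, ← Finset.card_filter, S.card_p i j x y, h]
      · simp [h]
    rw [Finset.sum_congr rfl fun y _ => step y, ← Finset.sum_filter, Finset.sum_const,
      S.card_r_eq x l, smul_eq_mul]
  have h2 : ∑ z : X, ∑ y : X, (if S.r x y = l ∧ S.r x z = i ∧ S.r z y = j then 1 else 0)
      = S.k i * S.p l (S.inv j) i := by
    have step : ∀ z : X, ∑ y : X, (if S.r x y = l ∧ S.r x z = i ∧ S.r z y = j then 1 else 0)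
        = if S.r x z = i then S.p l (S.inv j) i else 0 := by
      intro z
      by_cases h : S.r x z = i
      · rw [if_pos h]
        have e : ∀ y : X, (if S.r x y = l ∧ S.r x z = i ∧ S.r z y = j then (1:ℕ) else 0)
            = (if S.r x y = l ∧ S.r y z = S.inv j then 1 else 0) := by
          intro y
          congr 1
          rw [eq_iff_iff]
          constructor
          · rintro ⟨h1', _, h3'⟩; exact ⟨h1', (S.r_eq_iff z y j).mp h3'⟩
          · rintro ⟨h1', h2'⟩; exact ⟨h1', h, (S.r_eq_iff z y j).mpr h2'⟩
        rw [Finset.sum_congr rfl fun y _ => e y, ← Finset.card_filter, S.card_p l (S.inv j) x z, h]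
      · rw [if_neg h]
        exact Finset.sum_eq_zero fun y _ => by simp [h]
    rw [Finset.sum_congr rfl fun z _ => step z, ← Finset.sum_filter, Finset.sum_const,
      S.card_r_eq x i, smul_eq_mul]
  rw [← h1, ← h2, Finset.sum_comm]



variable {S : AssocScheme X d} {x : X}

lemma EJE_apply (i j : Fin (d + 1)) (y z : X) :
    (S.dualIdem F x i * Jmat F * S.dualIdem F x j : Matrix X X F) y z
      = if S.r x y = i ∧ S.r x z = j then 1 else 0 := by
  simp only [Matrix.mul_apply, dualIdem, Jmat, Matrix.of_apply, mul_one]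
  rw [Finset.sum_eq_single z (fun w _ hw => by simp [hw]) (fun h => absurd (Finset.mem_univ _) h),
    Finset.sum_eq_single y (fun w _ hw => by simp [Ne.symm hw]) (fun h => absurd (Finset.mem_univ _) h)]
  by_cases h1 : S.r x y = i <;> by_cases h2 : S.r x z = j <;> simp [h1, h2]

lemma dualIdem_mul_apply (a : Fin (d + 1)) (M : Matrix X X F) (y z : X) :
    (S.dualIdem F x a * M) y z = if S.r x y = a then M y z else 0 := by
  rw [Matrix.mul_apply, Finset.sum_eq_single y
    (fun w _ hw => by simp [dualIdem, Ne.symm hw])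
    (fun h => absurd (Finset.mem_univ _) h)]
  simp [dualIdem, ite_mul]

lemma mul_dualIdem_apply (a : Fin (d + 1)) (M : Matrix X X F) (y z : X) :
    (M * S.dualIdem F x a) y z = if S.r x z = a then M y z else 0 := by
  rw [Matrix.mul_apply, Finset.sum_eq_single z
    (fun w _ hw => by simp [dualIdem, hw])
    (fun h => absurd (Finset.mem_univ _) h)]
  by_cases h : S.r x z = a <;> simp [dualIdem, h]

lemma dualIdem_mul_EJE (a u v : Fin (d + 1)) :
    S.dualIdem F x a * (S.dualIdem F x u * Jmat F * S.dualIdem F x v)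
      = if a = u then S.dualIdem F x u * Jmat F * S.dualIdem F x v else 0 := by
  by_cases hau : a = u
  · subst hau
    rw [if_pos rfl]
    ext y z
    rw [dualIdem_mul_apply, EJE_apply]
    by_cases h1 : S.r x y = a <;> simp [h1, EJE_apply]
  · rw [if_neg hau]
    ext y z
    rw [dualIdem_mul_apply, EJE_apply]
    by_cases h1 : S.r x y = a <;> simp [h1, hau]

lemma EJE_mul_dualIdem (a u v : Fin (d + 1)) :
    (S.dualIdem F x u * Jmat F * S.dualIdem F x v) * S.dualIdem F x a
      = if a = v then S.dualIdem F x u * Jmat F * S.dualIdem F x v else 0 := by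
  by_cases hav : a = v
  · subst hav
    rw [if_pos rfl]
    ext y z
    rw [mul_dualIdem_apply, EJE_apply]
    by_cases h2 : S.r x z = a <;> simp [h2, EJE_apply]
  · rw [if_neg hav]
    ext y z
    rw [mul_dualIdem_apply, EJE_apply]
    by_cases h2 : S.r x z = a <;> simp [h2, hav]

lemma adjM_mul_EJE (b u v : Fin (d + 1)) :
    S.adjM F b * (S.dualIdem F x u * Jmat F * S.dualIdem F x v)
      = ∑ a : Fin (d + 1), ((S.p b (S.inv u) (S.inv a) : ℕ) : F) •
          (S.dualIdem F x a * Jmat F * S.dualIdem F x v) := by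
  ext y z
  rw [Matrix.mul_apply]
  simp only [adjM, Matrix.of_apply, EJE_apply, Matrix.sum_apply, Matrix.smul_apply,
    smul_eq_mul]
  have lhs : ∑ w : X, (if S.r y w = b then (1:F) else 0) *
      (if S.r x w = u ∧ S.r x z = v then 1 else 0)
      = if S.r x z = v then ((S.p b (S.inv u) (S.inv (S.r x y)) : ℕ) : F) else 0 := by
    by_cases hz : S.r x z = v
    · rw [if_pos hz]
      have e : ∀ w : X, (if S.r y w = b then (1:F) else 0) *
          (if S.r x w = u ∧ S.r x z = v then 1 else 0)
          = if S.r y w = b ∧ S.r x w = u then 1 else 0 := by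
        intro w
        by_cases h1 : S.r y w = b <;> by_cases h2 : S.r x w = u <;> simp [h1, h2, hz]
      have card_eq : (Finset.univ.filter fun w : X => S.r y w = b ∧ S.r x w = u).card
          = S.p b (S.inv u) (S.inv (S.r x y)) := by
        have hfe : (Finset.univ.filter fun w : X => S.r y w = b ∧ S.r x w = u)
            = (Finset.univ.filter fun w : X => S.r y w = b ∧ S.r w x = S.inv u) := by
          ext w
          simp only [Finset.mem_filter, Finset.mem_univ, true_and]
          rw [S.r_eq_iff x w u]
        rw [hfe, S.card_p b (S.inv u) y x, S.r_symm x y]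
      rw [Finset.sum_congr rfl fun w _ => e w, ← card_eq, Finset.card_filter]
      push_cast
      rfl
    · rw [if_neg hz]
      exact Finset.sum_eq_zero fun w _ => by simp [hz]
  have rhs : ∑ a : Fin (d + 1), ((S.p b (S.inv u) (S.inv a) : ℕ) : F) *
      (if S.r x y = a ∧ S.r x z = v then 1 else 0)
      = if S.r x z = v then ((S.p b (S.inv u) (S.inv (S.r x y)) : ℕ) : F) else 0 := by
    rw [Finset.sum_eq_single (S.r x y) (fun a _ ha => by simp [Ne.symm ha])
      (fun h => absurd (Finset.mem_univ _) h)]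
    by_cases hz : S.r x z = v <;> simp [hz]
  rw [lhs, ← rhs]

lemma EJE_mul_adjM (b u v : Fin (d + 1)) :
    (S.dualIdem F x u * Jmat F * S.dualIdem F x v) * S.adjM F b
      = ∑ c : Fin (d + 1), ((S.p v b c : ℕ) : F) •
          (S.dualIdem F x u * Jmat F * S.dualIdem F x c) := by
  ext y z
  rw [Matrix.mul_apply]
  simp only [adjM, Matrix.of_apply, EJE_apply, Matrix.sum_apply, Matrix.smul_apply,
    smul_eq_mul]
  have lhs : ∑ w : X, (if S.r x y = u ∧ S.r x w = v then (1:F) else 0) *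
      (if S.r w z = b then 1 else 0)
      = if S.r x y = u then ((S.p v b (S.r x z) : ℕ) : F) else 0 := by
    by_cases hy : S.r x y = u
    · rw [if_pos hy]
      have e : ∀ w : X, (if S.r x y = u ∧ S.r x w = v then (1:F) else 0) *
          (if S.r w z = b then 1 else 0)
          = if S.r x w = v ∧ S.r w z = b then 1 else 0 := by
        intro w
        by_cases h1 : S.r x w = v <;> by_cases h2 : S.r w z = b <;> simp [h1, h2, hy]
      rw [Finset.sum_congr rfl fun w _ => e w, ← S.card_p v b x z, Finset.card_filter]
      push_cast
      rfl
    · rw [if_neg hy]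
      exact Finset.sum_eq_zero fun w _ => by simp [hy]
  have rhs : ∑ c : Fin (d + 1), ((S.p v b c : ℕ) : F) *
      (if S.r x y = u ∧ S.r x z = c then 1 else 0)
      = if S.r x y = u then ((S.p v b (S.r x z) : ℕ) : F) else 0 := by
    rw [Finset.sum_eq_single (S.r x z) (fun c _ hc => by simp [Ne.symm hc])
      (fun h => absurd (Finset.mem_univ _) h)]
    by_cases hy : S.r x y = u <;> simp [hy]
  rw [lhs, ← rhs]

lemma Jmat_eq_sum : (Jmat F : Matrix X X F) = ∑ b : Fin (d + 1), S.adjM F b := by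
  ext y z
  simp only [Jmat, Matrix.of_apply, Matrix.sum_apply, adjM]
  rw [Finset.sum_eq_single (S.r y z) (fun b _ hb => by simp [Ne.symm hb])
    (fun h => absurd (Finset.mem_univ _) h)]
  simp

lemma EJE_mem_terw (i j : Fin (d + 1)) :
    S.dualIdem F x i * Jmat F * S.dualIdem F x j ∈ S.terw F x := by
  have hE : ∀ a : Fin (d + 1), S.dualIdem F x a ∈ S.terw F x := fun a =>
    Algebra.subset_adjoin (Or.inr ⟨a, rfl⟩)
  have hA : ∀ b : Fin (d + 1), S.adjM F b ∈ S.terw F x := fun b =>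
    Algebra.subset_adjoin (Or.inl ⟨b, rfl⟩)
  have hJ : (Jmat F : Matrix X X F) ∈ S.terw F x := by
    rw [Jmat_eq_sum (F := F) (S := S)]
    exact Subalgebra.sum_mem _ fun b _ => hA b
  exact Subalgebra.mul_mem _ (Subalgebra.mul_mem _ (hE i) hJ) (hE j)


lemma span_mul_left {s : Set (Matrix X X F)} {Z : Matrix X X F}
    (h : ∀ m ∈ s, Z * m ∈ Submodule.span F s) :
    ∀ b ∈ Submodule.span F s, Z * b ∈ Submodule.span F s := by
  intro b hb
  induction hb using Submodule.span_induction with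
  | mem m hm => exact h m hm
  | zero => simp
  | add a c _ _ ha hc => rw [mul_add]; exact Submodule.add_mem _ ha hc
  | smul r a _ ha => rw [mul_smul_comm]; exact Submodule.smul_mem _ _ ha

lemma span_mul_right {s : Set (Matrix X X F)} {Z : Matrix X X F}
    (h : ∀ m ∈ s, m * Z ∈ Submodule.span F s) :
    ∀ b ∈ Submodule.span F s, b * Z ∈ Submodule.span F s := by
  intro b hb
  induction hb using Submodule.span_induction with
  | mem m hm => exact h m hm
  | zero => simp
  | add a c _ _ ha hc => rw [add_mul]; exact Submodule.add_mem _ ha hc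
  | smul r a _ ha => rw [smul_mul_assoc]; exact Submodule.smul_mem _ _ ha

lemma adjoin_ideal {G : Set (Matrix X X F)} (B : Submodule F (Matrix X X F))
    (h : ∀ g ∈ G, ∀ m ∈ B, g * m ∈ B ∧ m * g ∈ B) :
    ∀ Z ∈ Algebra.adjoin F G, ∀ m ∈ B, Z * m ∈ B ∧ m * Z ∈ B := by
  intro Z hZ
  induction hZ using Algebra.adjoin_induction with
  | mem g hg => exact h g hg
  | algebraMap r =>
    intro m hm
    constructor
    · rw [Algebra.algebraMap_eq_smul_one, smul_mul_assoc, one_mul]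
      exact B.smul_mem r hm
    · rw [Algebra.algebraMap_eq_smul_one, mul_smul_comm, mul_one]
      exact B.smul_mem r hm
  | add u v _ _ hu hv =>
    intro m hm
    exact ⟨by rw [add_mul]; exact B.add_mem (hu m hm).1 (hv m hm).1,
      by rw [mul_add]; exact B.add_mem (hu m hm).2 (hv m hm).2⟩
  | mul u v _ _ hu hv =>
    intro m hm
    constructor
    · rw [mul_assoc]; exact (hu _ ((hv m hm).1)).1
    · rw [← mul_assoc]; exact (hv _ ((hu m hm).2)).2

lemma dvd_key_left {pp : ℕ} (hp : pp.Prime) {u v a b : Fin (d + 1)}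
    (hdvd : pp ∣ S.k u * S.k v) (hc : ¬ pp ∣ S.p b (S.inv u) (S.inv a)) :
    pp ∣ S.k a * S.k v := by
  have hid : S.k a * S.p b (S.inv u) (S.inv a) = S.k u * S.p a b u := by
    rw [S.p_transpose b (S.inv u) (S.inv a), S.inv_inv, S.inv_inv]
    rw [S.k_mul_p u (S.inv b) a, S.inv_inv]
  rcases (hp.dvd_mul.mp hdvd) with h | h
  · have h2 : pp ∣ S.k a * S.p b (S.inv u) (S.inv a) := by
      rw [hid]; exact h.mul_right _
    rcases hp.dvd_mul.mp h2 with h3 | h3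
    · exact h3.mul_right _
    · exact absurd h3 hc
  · exact h.mul_left _

lemma dvd_key_right {pp : ℕ} (hp : pp.Prime) {u v c b : Fin (d + 1)}
    (hdvd : pp ∣ S.k u * S.k v) (hc : ¬ pp ∣ S.p v b c) :
    pp ∣ S.k u * S.k c := by
  rcases (hp.dvd_mul.mp hdvd) with h | h
  · exact h.mul_right _
  · have h2 : pp ∣ S.k c * S.p v b c := by
      rw [S.k_mul_p v b c]; exact h.mul_right _
    rcases hp.dvd_mul.mp h2 with h3 | h3
    · exact h3.mul_left _
    · exact absurd h3 hc


end Helpers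

theorem B0_B1_twoSidedIdeals (p : ℕ) [Fact p.Prime] [CharP F p]
    (S : AssocScheme X d) (x : X) :
    B0 F S x ≤ Subalgebra.toSubmodule (S.terw F x) ∧
    (∀ Z ∈ S.terw F x, ∀ b ∈ B0 F S x, Z * b ∈ B0 F S x ∧ b * Z ∈ B0 F S x) ∧
    (∀ Z ∈ S.terw F x, ∀ b ∈ B1 F p S x, Z * b ∈ B1 F p S x ∧ b * Z ∈ B1 F p S x) := by
  have hp : p.Prime := Fact.out
  refine ⟨?_, ?_, ?_⟩
  · rw [B0, Submodule.span_le]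
    rintro _ ⟨⟨i, j⟩, rfl⟩
    exact EJE_mem_terw F i j
  · -- B0 ideal
    intro Z hZ
    refine adjoin_ideal F (B0 F S x) ?_ Z hZ
    rintro g (⟨b, rfl⟩ | ⟨a, rfl⟩) m hm
    · constructor
      · refine span_mul_left F ?_ m hm
        rintro _ ⟨⟨u, v⟩, rfl⟩
        rw [adjM_mul_EJE]
        exact Submodule.sum_mem _ fun a _ => Submodule.smul_mem _ _
          (Submodule.subset_span ⟨(a, v), rfl⟩)
      · refine span_mul_right F ?_ m hm
        rintro _ ⟨⟨u, v⟩, rfl⟩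
        rw [EJE_mul_adjM]
        exact Submodule.sum_mem _ fun c _ => Submodule.smul_mem _ _
          (Submodule.subset_span ⟨(u, c), rfl⟩)
    · constructor
      · refine span_mul_left F ?_ m hm
        rintro _ ⟨⟨u, v⟩, rfl⟩
        rw [dualIdem_mul_EJE]
        split
        · exact Submodule.subset_span ⟨(u, v), rfl⟩
        · exact Submodule.zero_mem _
      · refine span_mul_right F ?_ m hm
        rintro _ ⟨⟨u, v⟩, rfl⟩
        rw [EJE_mul_dualIdem]
        split
        · exact Submodule.subset_span ⟨(u, v), rfl⟩
        · exact Submodule.zero_mem _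
  · -- B1 ideal
    intro Z hZ
    refine adjoin_ideal F (B1 F p S x) ?_ Z hZ
    rintro g (⟨b, rfl⟩ | ⟨a, rfl⟩) m hm
    · constructor
      · refine span_mul_left F ?_ m hm
        rintro _ ⟨u, v, hdvd, rfl⟩
        rw [adjM_mul_EJE]
        refine Submodule.sum_mem _ fun a _ => ?_
        by_cases hc : p ∣ S.p b (S.inv u) (S.inv a)
        · rw [(CharP.cast_eq_zero_iff F p _).mpr hc, zero_smul]
          exact Submodule.zero_mem _
        · exact Submodule.smul_mem _ _
            (Submodule.subset_span ⟨a, v, dvd_key_left hp hdvd hc, rfl⟩)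
      · refine span_mul_right F ?_ m hm
        rintro _ ⟨u, v, hdvd, rfl⟩
        rw [EJE_mul_adjM]
        refine Submodule.sum_mem _ fun c _ => ?_
        by_cases hc : p ∣ S.p v b c
        · rw [(CharP.cast_eq_zero_iff F p _).mpr hc, zero_smul]
          exact Submodule.zero_mem _
        · exact Submodule.smul_mem _ _
            (Submodule.subset_span ⟨u, c, dvd_key_right hp hdvd hc, rfl⟩)
    · constructor
      · refine span_mul_left F ?_ m hm
        rintro _ ⟨u, v, hdvd, rfl⟩
        rw [dualIdem_mul_EJE]
        split
        · exact Submodule.subset_span ⟨u, v, hdvd, rfl⟩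
        · exact Submodule.zero_mem _
      · refine span_mul_right F ?_ m hm
        rintro _ ⟨u, v, hdvd, rfl⟩
        rw [EJE_mul_dualIdem]
        split
        · exact Submodule.subset_span ⟨u, v, hdvd, rfl⟩
        · exact Submodule.zero_mem _

end AssocScheme
end

section
/- B_1 is the unique maximal two-sided ideal of the (possibly non-unital) F-algebra B_0, where B_0 = span_F{E_i^* J E_j^* : i,j ∈ [0,d]} and B_1 = span_F{E_i^* J E_j^* : p | k_i k_j}. -/
open Matrix

namespace AssocScheme

variable {X : Type*} [Fintype X] [DecidableEq X] {d : ℕ}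

variable (F : Type*) [Field F]

section Aux
set_option linter.unusedSectionVars false

variable {F : Type*} [Field F]

lemma r_self (S : AssocScheme X d) (y : X) : S.r y y = 0 := (S.r_diag y y).mpr rfl

lemma card_fiber (S : AssocScheme X d) (x : X) (i : Fin (d + 1)) :
    (Finset.univ.filter fun z : X => S.r x z = i).card = S.k i := by
  have h := S.card_p i (S.inv i) x x
  rw [r_self] at h
  rw [k, ← h]
  congr 1
  ext z
  simp only [Finset.mem_filter, Finset.mem_univ, true_and]
  exact ⟨fun h1 => ⟨h1, by rw [S.r_symm, h1]⟩, fun h1 => h1.1⟩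

lemma k_pos (S : AssocScheme X d) (i : Fin (d + 1)) : 0 < S.k i := by
  obtain ⟨a, b, hab⟩ := S.surj i
  rw [← card_fiber S a i]
  exact Finset.card_pos.mpr ⟨b, by simp [hab]⟩

lemma exists_fiber (S : AssocScheme X d) (x : X) (i : Fin (d + 1)) :
    ∃ y : X, S.r x y = i := by
  have h : 0 < (Finset.univ.filter fun z : X => S.r x z = i).card := by
    rw [card_fiber S x i]; exact k_pos S i
  obtain ⟨y, hy⟩ := Finset.card_pos.mp h
  exact ⟨y, (Finset.mem_filter.mp hy).2⟩

/-- witness in fiber `i` -/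
noncomputable def wit (S : AssocScheme X d) (x : X) (i : Fin (d + 1)) : X :=
  (exists_fiber S x i).choose

lemma wit_spec (S : AssocScheme X d) (x : X) (i : Fin (d + 1)) :
    S.r x (wit S x i) = i := (exists_fiber S x i).choose_spec

/-- block-constant matrix -/
def blk (S : AssocScheme X d) (x : X) (c : Fin (d + 1) → Fin (d + 1) → F) :
    Matrix X X F :=
  Matrix.of fun u v => c (S.r x u) (S.r x v)

lemma blk_wit (S : AssocScheme X d) (x : X) (c : Fin (d + 1) → Fin (d + 1) → F)
    (i j : Fin (d + 1)) : blk S x c (wit S x i) (wit S x j) = c i j := by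
  simp [blk, wit_spec]

lemma blk_inj (S : AssocScheme X d) (x : X)
    {c c' : Fin (d + 1) → Fin (d + 1) → F} (h : blk S x c = blk S x c') :
    c = c' := by
  funext i j
  rw [← blk_wit S x c i j, ← blk_wit S x c' i j, h]

lemma M_eq_blk (S : AssocScheme X d) (x : X) (i j : Fin (d + 1)) :
    S.dualIdem F x i * Jmat F * S.dualIdem F x j =
      blk S x (fun a b => if a = i ∧ b = j then 1 else 0) := by
  ext u v
  simp only [Matrix.mul_apply, dualIdem, Jmat, blk, Matrix.of_apply]
  by_cases hi : S.r x u = i <;> by_cases hj : S.r x v = j <;>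
    simp [hi, hj, Finset.sum_ite_eq, ite_and]

lemma sum_fiber (S : AssocScheme X d) (x : X) (f : Fin (d + 1) → F) :
    ∑ z : X, f (S.r x z) = ∑ t, (S.k t : F) * f t := by
  rw [← Finset.sum_fiberwise Finset.univ (fun z => S.r x z) (fun z => f (S.r x z))]
  refine Finset.sum_congr rfl fun t _ => ?_
  rw [show ∑ z ∈ Finset.univ.filter (fun z => S.r x z = t), f (S.r x z)
        = ∑ z ∈ Finset.univ.filter (fun z => S.r x z = t), f t from
      Finset.sum_congr rfl fun z hz => by rw [(Finset.mem_filter.mp hz).2],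
    Finset.sum_const, card_fiber, nsmul_eq_mul]

lemma blk_mul_blk (S : AssocScheme X d) (x : X)
    (c c' : Fin (d + 1) → Fin (d + 1) → F) :
    blk S x c * blk S x c' =
      blk S x (fun i j => ∑ t, (S.k t : F) * (c i t * c' t j)) := by
  ext u v
  simp only [Matrix.mul_apply, blk, Matrix.of_apply]
  exact sum_fiber S x (fun t => c (S.r x u) t * c' t (S.r x v))

lemma blk_eq_sum (S : AssocScheme X d) (x : X)
    (c : Fin (d + 1) → Fin (d + 1) → F) :
    blk S x c = ∑ i, ∑ j, c i j •
      (S.dualIdem F x i * Jmat F * S.dualIdem F x j) := by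
  ext u v
  simp only [Finset.sum_apply, Matrix.sum_apply, Matrix.smul_apply, M_eq_blk,
    blk, Matrix.of_apply, smul_eq_mul, mul_ite, mul_one, mul_zero, ite_and]
  rw [Finset.sum_eq_single (S.r x u)]
  · simp
  · intro b _ hb; simp [Ne.symm hb]
  · simp

lemma mem_B0_iff (S : AssocScheme X d) (x : X) (b : Matrix X X F) :
    b ∈ S.B0 F x ↔ ∃ c, b = blk S x c := by
  constructor
  · intro hb
    induction hb using Submodule.span_induction with
    | mem z hz =>
        obtain ⟨⟨i, j⟩, rfl⟩ := hz
        exact ⟨_, M_eq_blk S x i j⟩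
    | zero => exact ⟨0, by ext u v; simp [blk]⟩
    | add y z _ _ hy hz =>
        obtain ⟨c1, rfl⟩ := hy; obtain ⟨c2, rfl⟩ := hz
        exact ⟨c1 + c2, by ext u v; simp [blk]⟩
    | smul a y _ hy =>
        obtain ⟨c1, rfl⟩ := hy
        exact ⟨a • c1, by ext u v; simp [blk]⟩
  · rintro ⟨c, rfl⟩
    rw [blk_eq_sum]
    exact Submodule.sum_mem _ fun i _ => Submodule.sum_mem _ fun j _ =>
      Submodule.smul_mem _ _ (Submodule.subset_span ⟨(i, j), rfl⟩)

lemma mem_B1_iff (p : ℕ) (S : AssocScheme X d) (x : X) (b : Matrix X X F) :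
    b ∈ B1 F p S x ↔ ∃ c, (∀ i j, ¬ p ∣ S.k i * S.k j → c i j = 0) ∧
      b = blk S x c := by
  constructor
  · intro hb
    induction hb using Submodule.span_induction with
    | mem z hz =>
        obtain ⟨i, j, hij, rfl⟩ := hz
        refine ⟨fun a b => if a = i ∧ b = j then 1 else 0, fun a b hab => ?_,
          M_eq_blk S x i j⟩
        simp only
        rw [if_neg]
        rintro ⟨rfl, rfl⟩; exact hab hij
    | zero => exact ⟨0, fun _ _ _ => rfl, by ext u v; simp [blk]⟩
    | add y z _ _ hy hz =>
        obtain ⟨c1, hc1, rfl⟩ := hy; obtain ⟨c2, hc2, rfl⟩ := hz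
        exact ⟨c1 + c2, fun i j h => by simp [hc1 i j h, hc2 i j h],
          by ext u v; simp [blk]⟩
    | smul a y _ hy =>
        obtain ⟨c1, hc1, rfl⟩ := hy
        exact ⟨a • c1, fun i j h => by simp [hc1 i j h],
          by ext u v; simp [blk]⟩
  · rintro ⟨c, hc, rfl⟩
    rw [blk_eq_sum]
    refine Submodule.sum_mem _ fun i _ => Submodule.sum_mem _ fun j _ => ?_
    by_cases h : p ∣ S.k i * S.k j
    · exact Submodule.smul_mem _ _ (Submodule.subset_span ⟨i, j, h, rfl⟩)
    · rw [hc i j h, zero_smul]; exact Submodule.zero_mem _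

end Aux

theorem B1_unique_maximal_ideal (p : ℕ) [Fact p.Prime] [CharP F p]
    (S : AssocScheme X d) (x : X) :
    B1 F p S x < B0 F S x ∧
    (∀ a ∈ B0 F S x, ∀ b ∈ B1 F p S x, a * b ∈ B1 F p S x ∧ b * a ∈ B1 F p S x) ∧
    ∀ I : Submodule F (Matrix X X F), I ≤ B0 F S x →
      (∀ a ∈ B0 F S x, ∀ b ∈ I, a * b ∈ I ∧ b * a ∈ I) →
        I ≠ B0 F S x → I ≤ B1 F p S x := by
  have hp : p.Prime := Fact.out
  have hk0 : S.k 0 = 1 := by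
    rw [← card_fiber S x 0,
      show (Finset.univ.filter fun z : X => S.r x z = 0) = {x} from by
        ext z
        simp only [Finset.mem_filter, Finset.mem_univ, true_and,
          Finset.mem_singleton]
        rw [S.r_diag x z, eq_comm]]
    simp
  have hcast : ∀ t : Fin (d + 1), ¬ p ∣ S.k t → (S.k t : F) ≠ 0 := fun t ht h =>
    ht ((CharP.cast_eq_zero_iff F p _).mp h)
  refine ⟨?_, ?_, ?_⟩
  · refine lt_of_le_of_ne ?_ ?_
    · intro b hb
      obtain ⟨c, _, rfl⟩ := (mem_B1_iff p S x b).mp hb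
      exact (mem_B0_iff S x _).mpr ⟨c, rfl⟩
    · intro h
      have hM00 : S.dualIdem F x 0 * Jmat F * S.dualIdem F x 0 ∈ B1 F p S x := by
        rw [h]; exact Submodule.subset_span ⟨(0, 0), rfl⟩
      obtain ⟨c, hc, hbc⟩ := (mem_B1_iff p S x _).mp hM00
      have h1 : c 0 0 = 0 := hc 0 0 (by
        rw [hk0]
        simpa using hp.ne_one)
      rw [M_eq_blk] at hbc
      have h2 := congrFun (congrFun (blk_inj S x hbc) 0) 0
      simp [h1] at h2
  · intro a ha b hb
    obtain ⟨ca, rfl⟩ := (mem_B0_iff S x a).mp ha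
    obtain ⟨cb, hcb, rfl⟩ := (mem_B1_iff p S x b).mp hb
    constructor
    · rw [blk_mul_blk]
      refine (mem_B1_iff p S x _).mpr ⟨_, ?_, rfl⟩
      intro i j hij
      have hij2 : ¬ p ∣ S.k j := fun h => hij (h.mul_left _)
      refine Finset.sum_eq_zero fun t _ => ?_
      by_cases ht : p ∣ S.k t
      · rw [(CharP.cast_eq_zero_iff F p _).mpr ht, zero_mul]
      · rw [hcb t j (fun h => (hp.dvd_mul.mp h).elim ht hij2), mul_zero, mul_zero]
    · rw [blk_mul_blk]
      refine (mem_B1_iff p S x _).mpr ⟨_, ?_, rfl⟩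
      intro i j hij
      have hij1 : ¬ p ∣ S.k i := fun h => hij (h.mul_right _)
      refine Finset.sum_eq_zero fun t _ => ?_
      by_cases ht : p ∣ S.k t
      · rw [(CharP.cast_eq_zero_iff F p _).mpr ht, zero_mul]
      · rw [hcb i t (fun h => (hp.dvd_mul.mp h).elim hij1 ht), zero_mul, mul_zero]
  · intro I hIle hIdeal hIne b hbI
    obtain ⟨c, hbc⟩ := (mem_B0_iff S x b).mp (hIle hbI)
    subst hbc
    refine (mem_B1_iff p S x _).mpr ⟨c, ?_, rfl⟩
    by_contra hcon
    push_neg at hcon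
    obtain ⟨i, j, hij, hcij⟩ := hcon
    have hi : ¬ p ∣ S.k i := fun h => hij (h.mul_right _)
    have hj : ¬ p ∣ S.k j := fun h => hij (h.mul_left _)
    set α : F := (S.k i : F) * (S.k j : F) * c i j with hα
    have hαne : α ≠ 0 :=
      mul_ne_zero (mul_ne_zero (hcast i hi) (hcast j hj)) hcij
    apply hIne
    refine le_antisymm hIle ?_
    rw [B0, Submodule.span_le]
    rintro _ ⟨⟨u, v⟩, rfl⟩
    have hB0ui : S.dualIdem F x u * Jmat F * S.dualIdem F x i ∈ S.B0 F x :=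
      Submodule.subset_span ⟨(u, i), rfl⟩
    have hB0jv : S.dualIdem F x j * Jmat F * S.dualIdem F x v ∈ S.B0 F x :=
      Submodule.subset_span ⟨(j, v), rfl⟩
    have step1 : (S.dualIdem F x u * Jmat F * S.dualIdem F x i) * blk S x c ∈ I :=
      (hIdeal _ hB0ui _ hbI).1
    have step2 : ((S.dualIdem F x u * Jmat F * S.dualIdem F x i) * blk S x c) *
        (S.dualIdem F x j * Jmat F * S.dualIdem F x v) ∈ I :=
      (hIdeal _ hB0jv _ step1).2
    have h1 : (S.dualIdem F x u * Jmat F * S.dualIdem F x i) * blk S x c =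
        blk S x (fun a t => if a = u then (S.k i : F) * c i t else 0) := by
      rw [M_eq_blk, blk_mul_blk]
      refine congrArg (blk S x) (funext fun a => funext fun t => ?_)
      by_cases hau : a = u
      · simp [hau, mul_ite, ite_mul, Finset.sum_ite_eq', mul_comm]
      · simp [hau]
    have h2 : blk S x (fun a t => if a = u then (S.k i : F) * c i t else 0) *
        (S.dualIdem F x j * Jmat F * S.dualIdem F x v) =
        α • (S.dualIdem F x u * Jmat F * S.dualIdem F x v) := by
      rw [M_eq_blk, M_eq_blk, blk_mul_blk]
      ext y z
      simp only [blk, Matrix.of_apply, Matrix.smul_apply, smul_eq_mul]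
      by_cases hau : S.r x y = u <;> by_cases hbv : S.r x z = v <;>
        simp only [hau, hbv, mul_ite, ite_mul, mul_one, mul_zero, zero_mul,
          one_mul, ite_and, if_true, if_false, and_true, and_false,
          Finset.sum_ite_eq', Finset.mem_univ, Finset.sum_const_zero, hα] <;>
        ring
    rw [h1, h2] at step2
    have h3 := Submodule.smul_mem I α⁻¹ step2
    rwa [smul_smul, inv_mul_cancel₀ hαne, one_smul] at h3

end AssocScheme
end
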